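/- arXiv:2211.11245 — 2 statements merged into one kernel-verified Lean document; each statement's English description precedes it below -/
import Mathlib

section
/- There exist ε₀ > 0 and C ≥ 0, depending only on h, such that for every ε with |ε| ≤ ε₀, every a ≥ 0, and every φ ∈ V_a with ∫₀¹ φ = 1: the map g_{ε,φ} is a strictly increasing bijection of ℝ and the function L_{ε,φ}φ := (φ / g_{ε,φ}') ∘ g_{ε,φ}^{-1} belongs to V_{a'}, where a' = a·(1 + C|ε|) + C|ε|. -/
open MeasureTheory

/-- The coupled map `g_{ε,φ}(x) = x + ε ∫₀¹ h(x,y) φ(y) dy`. -/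
noncomputable def gmap (h : ℝ → ℝ → ℝ) (ε : ℝ) (φ : ℝ → ℝ) : ℝ → ℝ :=
  fun x => x + ε * ∫ y in (0:ℝ)..1, h x y * φ y

/-- The transfer operator of `g_{ε,φ}` applied to `u`: `(u / g') ∘ g⁻¹`. -/
noncomputable def Lop (h : ℝ → ℝ → ℝ) (ε : ℝ) (φ u : ℝ → ℝ) : ℝ → ℝ :=
  fun x => u (Function.invFun (gmap h ε φ) x) /
    deriv (gmap h ε φ) (Function.invFun (gmap h ε φ) x)

/-- The transfer operator of the doubling map. -/
noncomputable def Pop (ψ : ℝ → ℝ) : ℝ → ℝ :=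
  fun x => (1/2) * ψ (x/2) + (1/2) * ψ ((x+1)/2)

/-- The self-consistent transfer operator `T_ε φ = P (L_{ε,φ} φ)`. -/
noncomputable def Tsc (h : ℝ → ℝ → ℝ) (ε : ℝ) (φ : ℝ → ℝ) : ℝ → ℝ :=
  Pop (Lop h ε φ φ)

/-- `h` is 1-periodic in each variable. -/
def periodicH (h : ℝ → ℝ → ℝ) : Prop :=
  (∀ x y, h (x+1) y = h x y) ∧ (∀ x y, h x (y+1) = h x y)

/-- `B_L`: 1-periodic, nonnegative, `L`-Lipschitz densities with `∫₀¹ φ = 1`. -/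
def memB (L : ℝ) (φ : ℝ → ℝ) : Prop :=
  (∀ x, φ (x+1) = φ x) ∧ (∀ x, 0 ≤ φ x) ∧
  (∀ x y, |φ x - φ y| ≤ L * |x - y|) ∧ (∫ x in (0:ℝ)..1, φ x) = 1

/-- The cone `V_a` of positive, continuous, 1-periodic functions with
`φ x ≤ e^{a|x−y|} φ y` for all `x, y`. -/
def memV (a : ℝ) (φ : ℝ → ℝ) : Prop :=
  Continuous φ ∧ (∀ x, 0 < φ x) ∧ (∀ x, φ (x+1) = φ x) ∧
  ∀ x y, φ x ≤ Real.exp (a * |x - y|) * φ y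

/-!
Write `g_{ε,φ} = id + ε Φ` with `Φ x = ∫₀¹ h(x,y) φ(y) dy`. Being `C¹` and `ℤ²`-periodic, `h` and
`∂ₓh` are globally Lipschitz, say with constants `K₁` and `K₂`; averaging against the probability
density `φ` makes `Φ` `K₁`-Lipschitz and `Φ'` `K₂`-Lipschitz. For `|ε| K₁ ≤ 1/2` we get
`g' = 1 + ε Φ' ≥ 1/2`, and `g(x + 1) = g x + 1`, so `g` is a continuous lift of a degree-one circle
map, hence a bijection, whose inverse is `(1 - |ε| K₁)⁻¹`-Lipschitz. The cones satisfy
`V_a / V_b ⊆ V_{a+b}` and `V_a ∘ T ⊆ V_{aΛ}` for `Λ`-Lipschitz lifts `T`, and `g' ∈ V_{2|ε|K₂}`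
because it is `|ε| K₂`-Lipschitz and at least `1/2`. Hence `(φ / g') ∘ g⁻¹` lies in
`V_{(a + 2|ε|K₂)(1 - |ε|K₁)⁻¹}`, and this exponent is at most `a(1 + C|ε|) + C|ε|` for
`C = 2K₁ + 4K₂`.
-/

open Function
open scoped NNReal

section Periodic

variable {E : Type*} [NormedAddCommGroup E]

theorem Function.Periodic.fderiv {𝕜 F : Type*} [NontriviallyNormedField 𝕜] [NormedSpace 𝕜 E]
    [NormedAddCommGroup F] [NormedSpace 𝕜 F] {f : E → F} {c : E} (hf : Periodic f c) :
    Periodic (fderiv 𝕜 f) c :=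
  fun p => by rw [← fderiv_comp_add_right, show (fun q => f (q + c)) = f from funext hf]

theorem Continuous.exists_bound_of_periodic {F : ℝ × ℝ → E} (hF : Continuous F)
    (h₁ : Periodic F (1, 0)) (h₂ : Periodic F (0, 1)) : ∃ M, ∀ p, ‖F p‖ ≤ M := by
  obtain ⟨M, hM⟩ :=
    (isCompact_Icc.prod isCompact_Icc).exists_bound_of_continuousOn hF.continuousOn
  refine ⟨M, fun p => ?_⟩
  have hfract :
      (Int.fract p.1, Int.fract p.2) = p - ⌊p.1⌋ • ((1 : ℝ), (0 : ℝ)) - ⌊p.2⌋ • (0, 1) := by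
    ext <;> simp [← Int.self_sub_floor]
  have hmem : (Int.fract p.1, Int.fract p.2) ∈ Set.Icc (0 : ℝ) 1 ×ˢ Set.Icc (0 : ℝ) 1 :=
    ⟨⟨Int.fract_nonneg _, (Int.fract_lt_one _).le⟩, ⟨Int.fract_nonneg _, (Int.fract_lt_one _).le⟩⟩
  simpa only [hfract, h₂.sub_zsmul_eq, h₁.sub_zsmul_eq] using hM _ hmem

theorem ContDiff.exists_lipschitzWith_of_periodic [NormedSpace ℝ E] {F : ℝ × ℝ → E}
    (hF : ContDiff ℝ 1 F) (h₁ : Periodic F (1, 0)) (h₂ : Periodic F (0, 1)) :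
    ∃ K, LipschitzWith K F := by
  obtain ⟨M, hM⟩ :=
    (hF.continuous_fderiv one_ne_zero).exists_bound_of_periodic h₁.fderiv h₂.fderiv
  refine ⟨.mk (max M 0) (le_max_right _ _), ?_⟩
  refine lipschitzWith_of_nnnorm_fderiv_le (hF.differentiable one_ne_zero) fun p => ?_
  simp [← NNReal.coe_le_coe, hM p]

end Periodic

section PartialDeriv

variable {G : ℝ → ℝ → ℝ}

noncomputable def partialFst (G : ℝ → ℝ → ℝ) (x y : ℝ) : ℝ :=
  fderiv ℝ (uncurry G) (x, y) (1, 0)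

theorem hasDerivAt_partialFst (hG : Differentiable ℝ (uncurry G)) (x y : ℝ) :
    HasDerivAt (fun t => G t y) (partialFst G x y) x := by
  have hline : HasDerivAt (fun t : ℝ => (t, y)) ((1 : ℝ), (0 : ℝ)) x :=
    (hasDerivAt_id x).prodMk (hasDerivAt_const x y)
  exact (hG (x, y)).hasFDerivAt.comp_hasDerivAt x hline

theorem contDiff_partialFst {n : WithTop ℕ∞} (hG : ContDiff ℝ (n + 1) (uncurry G)) :
    ContDiff ℝ n (uncurry (partialFst G)) :=
  (hG.fderiv_right le_rfl).clm_apply contDiff_const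

theorem Function.Periodic.partialFst {c : ℝ × ℝ} (hG : Periodic (uncurry G) c) :
    Periodic (uncurry (partialFst G)) c :=
  hG.fderiv.comp fun L => L (1, 0)

end PartialDeriv

structure IsContinuousDensity (φ : ℝ → ℝ) : Prop where
  continuous : Continuous φ
  nonneg : ∀ y, 0 ≤ φ y
  integral_eq_one : ∫ y in (0:ℝ)..1, φ y = 1

noncomputable def meanField (G : ℝ → ℝ → ℝ) (φ : ℝ → ℝ) (x : ℝ) : ℝ :=
  ∫ y in (0:ℝ)..1, G x y * φ y

section MeanField

variable {G : ℝ → ℝ → ℝ} {φ : ℝ → ℝ}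

theorem IsContinuousDensity.abs_integral_mul_le (hφ : IsContinuousDensity φ) {f : ℝ → ℝ}
    {M : ℝ} (hf : Continuous f) (hM : ∀ y, |f y| ≤ M) : |∫ y in (0:ℝ)..1, f y * φ y| ≤ M :=
  calc |∫ y in (0:ℝ)..1, f y * φ y|
      ≤ ∫ y in (0:ℝ)..1, |f y * φ y| := intervalIntegral.abs_integral_le_integral_abs zero_le_one
    _ ≤ ∫ y in (0:ℝ)..1, M * φ y := by
        refine intervalIntegral.integral_mono_on zero_le_one
          ((hf.mul hφ.continuous).abs.intervalIntegrable 0 1)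
          ((continuous_const.mul hφ.continuous).intervalIntegrable 0 1) fun y _ => ?_
        rw [abs_mul, abs_of_nonneg (hφ.nonneg y)]
        exact mul_le_mul_of_nonneg_right (hM y) (hφ.nonneg y)
    _ = M := by rw [intervalIntegral.integral_const_mul, hφ.integral_eq_one, mul_one]

theorem LipschitzWith.uncurry_right {K : ℝ≥0} (y : ℝ) (hG : LipschitzWith K (uncurry G)) :
    LipschitzWith K fun x => G x y := by
  simpa [comp_def] using hG.comp (LipschitzWith.prodMk_right y)

theorem lipschitzWith_meanField {K : ℝ≥0} (hG : LipschitzWith K (uncurry G))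
    (hφ : IsContinuousDensity φ) :
    LipschitzWith K (meanField G φ) := by
  refine LipschitzWith.of_dist_le_mul fun u v => ?_
  have hsub : meanField G φ u - meanField G φ v = ∫ y in (0:ℝ)..1, (G u y - G v y) * φ y := by
    simp only [meanField, sub_mul]
    exact (intervalIntegral.integral_sub
      (((hG.continuous.uncurry_left u).mul hφ.continuous).intervalIntegrable 0 1)
      (((hG.continuous.uncurry_left v).mul hφ.continuous).intervalIntegrable 0 1)).symm
  rw [Real.dist_eq, Real.dist_eq, hsub]
  exact hφ.abs_integral_mul_le
    ((hG.continuous.uncurry_left u).sub (hG.continuous.uncurry_left v)) fun y => by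
      simpa [Real.dist_eq] using (hG.uncurry_right y).dist_le_mul u v

theorem hasDerivAt_meanField {K : ℝ≥0} (hG : ContDiff ℝ 1 (uncurry G))
    (hK : LipschitzWith K (uncurry G)) (hφ : Continuous φ) (x : ℝ) :
    HasDerivAt (meanField G φ) (meanField (partialFst G) φ x) x := by
  have hdiff := hG.differentiable one_ne_zero
  have hpartial : Continuous (uncurry (partialFst G)) :=
    (contDiff_partialFst (n := 0) (by simpa using hG)).continuous
  refine (intervalIntegral.hasDerivAt_integral_of_dominated_loc_of_deriv_le
    (F' := fun x y => partialFst G x y * φ y) (bound := fun y => K * |φ y|)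
    Filter.univ_mem ?_ ?_ ?_ ?_ ?_ ?_).2
  · exact .of_forall fun x => ((hG.continuous.uncurry_left x).mul hφ).aestronglyMeasurable
  · exact ((hG.continuous.uncurry_left x).mul hφ).intervalIntegrable 0 1
  · exact ((hpartial.uncurry_left x).mul hφ).aestronglyMeasurable
  · refine .of_forall fun y _ x _ => ?_
    rw [Real.norm_eq_abs, abs_mul]
    exact mul_le_mul_of_nonneg_right
      ((hasDerivAt_partialFst hdiff x y).le_of_lipschitz (hK.uncurry_right y)) (abs_nonneg _)
  · exact (continuous_const.mul hφ.abs).intervalIntegrable 0 1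
  · exact .of_forall fun y _ x _ => (hasDerivAt_partialFst hdiff x y).mul_const (φ y)

theorem meanField_add_one (hG : Periodic (uncurry G) (1, 0)) (x : ℝ) :
    meanField G φ (x + 1) = meanField G φ x := by
  simp only [meanField]
  congr 1 with y
  simpa using congrArg (· * φ y) (hG (x, y))

end MeanField

section Cone

variable {a b : ℝ} {φ ψ : ℝ → ℝ}

theorem memV.mono (hab : a ≤ b) (hφ : memV a φ) : memV b φ := by
  refine ⟨hφ.1, hφ.2.1, hφ.2.2.1, fun x y => (hφ.2.2.2 x y).trans ?_⟩
  have := (hφ.2.1 y).le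
  gcongr

theorem memV.div (hφ : memV a φ) (hψ : memV b ψ) : memV (a + b) fun x => φ x / ψ x := by
  obtain ⟨hφc, hφpos, hφper, hφV⟩ := hφ
  obtain ⟨hψc, hψpos, hψper, hψV⟩ := hψ
  refine ⟨hφc.div hψc fun x => (hψpos x).ne', fun x => div_pos (hφpos x) (hψpos x),
    fun x => by simp only [hφper, hψper], fun x y => ?_⟩
  have hψyx : ψ y ≤ Real.exp (b * |x - y|) * ψ x := by simpa [abs_sub_comm] using hψV y x
  have hφy := hφpos y
  have hψy := hψpos y
  rw [div_le_iff₀ (hψpos x)]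
  calc φ x ≤ Real.exp (a * |x - y|) * φ y := hφV x y
    _ = Real.exp (a * |x - y|) * (φ y / ψ y) * ψ y := by field_simp
    _ ≤ Real.exp (a * |x - y|) * (φ y / ψ y) * (Real.exp (b * |x - y|) * ψ x) := by gcongr
    _ = Real.exp ((a + b) * |x - y|) * (φ y / ψ y) * ψ x := by rw [add_mul, Real.exp_add]; ring

theorem memV.comp_lipschitzWith {Λ : ℝ≥0} {T : ℝ → ℝ} (ha : 0 ≤ a) (hφ : memV a φ)
    (hT : LipschitzWith Λ T) (hT₁ : ∀ x, T (x + 1) = T x + 1) : memV (a * Λ) (φ ∘ T) := by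
  obtain ⟨hφc, hφpos, hφper, hφV⟩ := hφ
  refine ⟨hφc.comp hT.continuous, fun x => hφpos _, fun x => by simp [hT₁, hφper],
    fun x y => (hφV (T x) (T y)).trans ?_⟩
  have hTxy : |T x - T y| ≤ Λ * |x - y| := by simpa [Real.dist_eq] using hT.dist_le_mul x y
  have := hφpos (T y)
  rw [comp_apply, mul_assoc]
  gcongr

theorem memV_of_lipschitzWith {L : ℝ≥0} {c : ℝ} {D : ℝ → ℝ} (hc : 0 < c)
    (hD : LipschitzWith L D) (hDc : ∀ x, c ≤ D x) (hper : ∀ x, D (x + 1) = D x) :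
    memV (L / c) D := by
  refine ⟨hD.continuous, fun x => hc.trans_le (hDc x), hper, fun x y => ?_⟩
  have hxy : D x - D y ≤ L * |x - y| :=
    (le_abs_self _).trans (by simpa [Real.dist_eq] using hD.dist_le_mul x y)
  have hLc : L * |x - y| ≤ L / c * |x - y| * D y := by
    rw [div_mul_eq_mul_div, div_mul_eq_mul_div, le_div_iff₀ hc]
    gcongr
    exact hDc y
  calc D x ≤ (1 + L / c * |x - y|) * D y := by linarith
    _ ≤ Real.exp (L / c * |x - y|) * D y := by
      have := hc.trans_le (hDc y)
      gcongr
      linarith [Real.add_one_le_exp (L / c * |x - y|)]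

end Cone

theorem periodicH.periodic_fst {h : ℝ → ℝ → ℝ} (hper : periodicH h) :
    Periodic (uncurry h) (1, 0) :=
  fun ⟨x, y⟩ => by simp [hper.1]

theorem periodicH.periodic_snd {h : ℝ → ℝ → ℝ} (hper : periodicH h) :
    Periodic (uncurry h) (0, 1) :=
  fun ⟨x, y⟩ => by simp [hper.2]

theorem invFun_add_one {f : ℝ → ℝ} (hf : Bijective f) (hf₁ : ∀ x, f (x + 1) = f x + 1)
    (x : ℝ) : invFun f (x + 1) = invFun f x + 1 :=
  hf.1 <| by rw [hf₁, invFun_eq (hf.2 _), invFun_eq (hf.2 _)]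

theorem memV.isContinuousDensity {a : ℝ} {φ : ℝ → ℝ} (hφ : memV a φ)
    (hφ₁ : ∫ y in (0:ℝ)..1, φ y = 1) : IsContinuousDensity φ :=
  ⟨hφ.1, fun y => (hφ.2.1 y).le, hφ₁⟩

section CoupledMap

variable {h : ℝ → ℝ → ℝ} {K₁ K₂ : ℝ≥0} {ε a : ℝ} {φ : ℝ → ℝ}

theorem gmap_add_one (hper : Periodic (uncurry h) (1, 0)) (x : ℝ) :
    gmap h ε φ (x + 1) = gmap h ε φ x + 1 := by
  change x + 1 + ε * meanField h φ (x + 1) = x + ε * meanField h φ x + 1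
  rw [meanField_add_one hper]
  ring

theorem hasDerivAt_gmap (hh : ContDiff ℝ 1 (uncurry h)) (hK₁ : LipschitzWith K₁ (uncurry h))
    (hφ : Continuous φ) (x : ℝ) :
    HasDerivAt (gmap h ε φ) (1 + ε * meanField (partialFst h) φ x) x :=
  (hasDerivAt_id x).add ((hasDerivAt_meanField hh hK₁ hφ x).const_mul ε)

theorem half_le_deriv_gmap (hh : ContDiff ℝ 1 (uncurry h)) (hK₁ : LipschitzWith K₁ (uncurry h))
    (hφ : IsContinuousDensity φ) (hε : |ε| * K₁ ≤ 1 / 2) (x : ℝ) :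
    1 / 2 ≤ 1 + ε * meanField (partialFst h) φ x := by
  have hbound : |meanField (partialFst h) φ x| ≤ K₁ :=
    (hasDerivAt_meanField hh hK₁ hφ.continuous x).le_of_lipschitz (lipschitzWith_meanField hK₁ hφ)
  have : |ε * meanField (partialFst h) φ x| ≤ 1 / 2 := by
    rw [abs_mul]
    exact (mul_le_mul_of_nonneg_left hbound (abs_nonneg ε)).trans hε
  linarith [neg_abs_le (ε * meanField (partialFst h) φ x)]

theorem strictMono_gmap (hh : ContDiff ℝ 1 (uncurry h)) (hK₁ : LipschitzWith K₁ (uncurry h))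
    (hφ : IsContinuousDensity φ) (hε : |ε| * K₁ ≤ 1 / 2) : StrictMono (gmap h ε φ) :=
  strictMono_of_hasDerivAt_pos (hasDerivAt_gmap hh hK₁ hφ.continuous) fun x => by
    linarith [half_le_deriv_gmap hh hK₁ hφ hε x]

theorem bijective_gmap (hh : ContDiff ℝ 1 (uncurry h)) (hper : Periodic (uncurry h) (1, 0))
    (hK₁ : LipschitzWith K₁ (uncurry h)) (hφ : IsContinuousDensity φ)
    (hε : |ε| * K₁ ≤ 1 / 2) : Bijective (gmap h ε φ) := by
  have hmono := strictMono_gmap hh hK₁ hφ hε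
  let lift : CircleDeg1Lift := ⟨⟨gmap h ε φ, hmono.monotone⟩, gmap_add_one hper⟩
  have hcont : Continuous (gmap h ε φ) :=
    continuous_iff_continuousAt.2 fun x => (hasDerivAt_gmap hh hK₁ hφ.continuous x).continuousAt
  exact ⟨hmono.injective, lift.continuous_iff_surjective.1 hcont⟩

theorem lipschitzWith_invFun_gmap (hK₁ : LipschitzWith K₁ (uncurry h))
    (hφ : IsContinuousDensity φ) (hε : ‖ε‖₊ * K₁ < 1) (hsurj : Surjective (gmap h ε φ)) :
    LipschitzWith (1 - ‖ε‖₊ * K₁)⁻¹ (invFun (gmap h ε φ)) := by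
  have hanti : AntilipschitzWith (1 - ‖ε‖₊ * K₁)⁻¹ fun x => x + ε * meanField h φ x := by
    simpa using AntilipschitzWith.id.add_lipschitzWith
      ((lipschitzWith_smul ε).comp (lipschitzWith_meanField hK₁ hφ)) (by simpa using hε)
  exact hanti.to_rightInverse (rightInverse_invFun hsurj)

theorem memV_deriv_gmap (hh : ContDiff ℝ 1 (uncurry h)) (hper : Periodic (uncurry h) (1, 0))
    (hK₁ : LipschitzWith K₁ (uncurry h)) (hK₂ : LipschitzWith K₂ (uncurry (partialFst h)))
    (hφ : IsContinuousDensity φ) (hε : |ε| * K₁ ≤ 1 / 2) :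
    memV (2 * |ε| * K₂) (deriv (gmap h ε φ)) := by
  have hderiv : deriv (gmap h ε φ) = fun x => 1 + ε * meanField (partialFst h) φ x :=
    funext fun x => (hasDerivAt_gmap hh hK₁ hφ.continuous x).deriv
  have hlip : LipschitzWith (‖ε‖₊ * K₂) fun x => 1 + ε * meanField (partialFst h) φ x := by
    simpa using (LipschitzWith.const 1).add
      ((lipschitzWith_smul ε).comp (lipschitzWith_meanField hK₂ hφ))
  rw [hderiv]
  convert memV_of_lipschitzWith one_half_pos hlip (half_le_deriv_gmap hh hK₁ hφ hε)
    fun x => by rw [meanField_add_one hper.partialFst] using 1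
  push_cast [Real.norm_eq_abs]
  ring

theorem memV_Lop (hh : ContDiff ℝ 1 (uncurry h)) (hper : Periodic (uncurry h) (1, 0))
    (hK₁ : LipschitzWith K₁ (uncurry h)) (hK₂ : LipschitzWith K₂ (uncurry (partialFst h)))
    (hε : |ε| * K₁ ≤ 1 / 2) (ha : 0 ≤ a) (hφ : memV a φ) (hφ₁ : ∫ y in (0:ℝ)..1, φ y = 1) :
    memV ((a + 2 * |ε| * K₂) * (1 - |ε| * K₁)⁻¹) (Lop h ε φ φ) := by
  have hφd := hφ.isContinuousDensity hφ₁
  have hbij := bijective_gmap hh hper hK₁ hφd hε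
  have hεK : ‖ε‖₊ * K₁ < 1 := by
    rw [← NNReal.coe_lt_coe]
    push_cast [Real.norm_eq_abs]
    linarith
  have hΛ : ((1 - ‖ε‖₊ * K₁)⁻¹ : ℝ≥0) = (1 - |ε| * K₁)⁻¹ := by
    rw [NNReal.coe_inv, NNReal.coe_sub hεK.le]
    simp [Real.norm_eq_abs]
  have := (hφ.div (memV_deriv_gmap hh hper hK₁ hK₂ hφd hε)).comp_lipschitzWith (by positivity)
    (lipschitzWith_invFun_gmap hK₁ hφd hεK hbij.2) (invFun_add_one hbij (gmap_add_one hper))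
  rw [hΛ] at this
  -- `Lop h ε φ φ` unfolds to `(fun x => φ x / deriv g x) ∘ invFun g`.
  exact this

end CoupledMap

theorem add_mul_inv_one_sub_le {a e K₁ K₂ : ℝ} (ha : 0 ≤ a) (he : 0 ≤ e) (hK₁ : 0 ≤ K₁)
    (hK₂ : 0 ≤ K₂) (heK : e * K₁ ≤ 1 / 2) :
    (a + 2 * e * K₂) * (1 - e * K₁)⁻¹ ≤ a * (1 + (2 * K₁ + 4 * K₂) * e) + (2 * K₁ + 4 * K₂) * e := by
  have hinv : (1 - e * K₁)⁻¹ ≤ 1 + 2 * (e * K₁) := by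
    rw [inv_le_iff_one_le_mul₀ (by linarith)]
    nlinarith [mul_nonneg (mul_nonneg he hK₁) (by linarith : (0 : ℝ) ≤ 1 - 2 * (e * K₁))]
  calc (a + 2 * e * K₂) * (1 - e * K₁)⁻¹ ≤ (a + 2 * e * K₂) * (1 + 2 * (e * K₁)) := by gcongr
    _ ≤ a * (1 + (2 * K₁ + 4 * K₂) * e) + (2 * K₁ + 4 * K₂) * e := by
      nlinarith [mul_nonneg (mul_nonneg ha he) hK₂, mul_nonneg he hK₁,
        mul_le_mul_of_nonneg_left heK (mul_nonneg he hK₂)]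

/-- For small `ε`, `g_{ε,φ}` is a strictly increasing bijection and the transfer operator
`L_{ε,φ}` maps `V_a ∩ {∫₀¹ φ = 1}` into `V_{a'}` with `a' = a(1 + C|ε|) + C|ε|`. -/
theorem stmt8 (h : ℝ → ℝ → ℝ) (hC2 : ContDiff ℝ 2 (Function.uncurry h))
    (hper : periodicH h) :
    ∃ ε₀ > (0:ℝ), ∃ C ≥ (0:ℝ), ∀ ε : ℝ, |ε| ≤ ε₀ → ∀ a : ℝ, 0 ≤ a →
      ∀ φ : ℝ → ℝ, memV a φ → (∫ x in (0:ℝ)..1, φ x) = 1 →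
        StrictMono (gmap h ε φ) ∧ Function.Bijective (gmap h ε φ) ∧
        memV (a * (1 + C * |ε|) + C * |ε|) (Lop h ε φ φ) := by
  have hh : ContDiff ℝ 1 (uncurry h) := hC2.of_le one_le_two
  obtain ⟨K₁, hK₁⟩ := hh.exists_lipschitzWith_of_periodic hper.periodic_fst hper.periodic_snd
  obtain ⟨K₂, hK₂⟩ := (contDiff_partialFst (n := 1) hC2).exists_lipschitzWith_of_periodic
    hper.periodic_fst.partialFst hper.periodic_snd.partialFst
  refine ⟨1 / (2 * (K₁ + 1)), by positivity, 2 * K₁ + 4 * K₂, by positivity,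
    fun ε hε a ha φ hφ hφ₁ => ?_⟩
  have hεK : |ε| * K₁ ≤ 1 / 2 :=
    calc |ε| * K₁ ≤ 1 / (2 * (K₁ + 1)) * (K₁ + 1) := by gcongr; linarith
      _ = 1 / 2 := by field_simp
  have hφd := hφ.isContinuousDensity hφ₁
  exact ⟨strictMono_gmap hh hK₁ hφd hεK, bijective_gmap hh hper.periodic_fst hK₁ hφd hεK,
    (memV_Lop hh hper.periodic_fst hK₁ hK₂ hεK ha hφ hφ₁).mono
      (add_mul_inv_one_sub_le ha (abs_nonneg ε) K₁.coe_nonneg K₂.coe_nonneg hεK)⟩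
end

section
/- There exist ε₀ > 0 and C ≥ 0, depending only on h, such that for every ε with |ε| ≤ ε₀ and all 1-periodic, nonnegative, continuous functions φ₁, φ₂ : ℝ → ℝ with ∫₀¹ φ₁ = ∫₀¹ φ₂ = 1, writing g_i := g_{ε,φ_i} (i = 1,2), one has sup_{x∈ℝ} |1/g₁'(x) − 1/g₂'(x)| ≤ C·|ε|·sup_{x∈ℝ} |φ₁(x) − φ₂(x)|. -/
open MeasureTheory

/-!
Since `∂ₓh` is continuous and doubly periodic it is bounded, say by `M`. Differentiating under
the integral, `g'_{ε,φ}(x) = 1 + ε ∫₀¹ ∂ₓh(x,y) φ(y) dy`, and for a probability density `φ` the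
integral is at most `M` in absolute value, so for `|ε| ≤ 1/(2(M+1))` both derivatives lie in
`[1/2, 3/2]`. Then `|1/g₁' - 1/g₂'| ≤ 4 |g₁' - g₂'| ≤ 4 M |ε| sup |φ₁ - φ₂|`.
-/

open Function Set

noncomputable def partialDerivFst (h : ℝ → ℝ → ℝ) (x y : ℝ) : ℝ := deriv (h · y) x

section PartialDerivFst

variable {h : ℝ → ℝ → ℝ}

theorem hasDerivAt_fderiv_apply_fst (hh : Differentiable ℝ (uncurry h)) (x y : ℝ) :
    HasDerivAt (h · y) (fderiv ℝ (uncurry h) (x, y) (1, 0)) x :=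
  (hh (x, y)).hasFDerivAt.comp_hasDerivAt (f := fun x => (x, y)) x
    ((hasDerivAt_id' x).prodMk (hasDerivAt_const x y))

theorem partialDerivFst_eq_fderiv (hh : Differentiable ℝ (uncurry h)) (x y : ℝ) :
    partialDerivFst h x y = fderiv ℝ (uncurry h) (x, y) (1, 0) :=
  (hasDerivAt_fderiv_apply_fst hh x y).deriv

theorem hasDerivAt_partialDerivFst (hh : Differentiable ℝ (uncurry h)) (x y : ℝ) :
    HasDerivAt (h · y) (partialDerivFst h x y) x :=
  partialDerivFst_eq_fderiv hh x y ▸ hasDerivAt_fderiv_apply_fst hh x y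

theorem continuous_partialDerivFst (hh : ContDiff ℝ 1 (uncurry h)) :
    Continuous (uncurry (partialDerivFst h)) := by
  have hd := hh.differentiable one_ne_zero
  simp only [uncurry_def, partialDerivFst_eq_fderiv hd]
  exact (hh.continuous_fderiv one_ne_zero).clm_apply continuous_const

theorem continuous_partialDerivFst_apply (hh : ContDiff ℝ 1 (uncurry h)) (x : ℝ) :
    Continuous (partialDerivFst h x) :=
  (continuous_partialDerivFst hh).comp (.prodMk_right x)

theorem periodicH.partialDerivFst (hper : periodicH h) : periodicH (partialDerivFst h) := by
  refine ⟨fun x y => ?_, fun x y => ?_⟩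
  · simp only [_root_.partialDerivFst, ← deriv_comp_add_const, hper.1]
  · simp only [_root_.partialDerivFst, hper.2]

theorem periodicH.range_uncurry_subset (hper : periodicH h) :
    range (uncurry h) ⊆ uncurry h '' (Icc 0 1 ×ˢ Icc 0 1) := by
  rintro _ ⟨⟨x, y⟩, rfl⟩
  have hperx : Periodic (h · y) 1 := fun x => hper.1 x y
  obtain ⟨x', hx', hx⟩ := hperx.exists_mem_Ico₀ one_pos x
  have hpery : Periodic (h x') 1 := hper.2 x'
  obtain ⟨y', hy', hy⟩ := hpery.exists_mem_Ico₀ one_pos y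
  exact ⟨(x', y'), ⟨Ico_subset_Icc_self hx', Ico_subset_Icc_self hy'⟩, by simp [hx, hy]⟩

theorem periodicH.exists_abs_le (hper : periodicH h) (hc : Continuous (uncurry h)) :
    ∃ M, ∀ x y, |h x y| ≤ M := by
  have hb := ((isCompact_Icc.prod isCompact_Icc).image hc).isBounded.subset
    hper.range_uncurry_subset
  obtain ⟨M, hM⟩ := isBounded_iff_forall_norm_le.1 hb
  exact ⟨M, fun x y => hM _ ⟨(x, y), rfl⟩⟩

theorem hasDerivAt_integral_mul (hh : ContDiff ℝ 1 (uncurry h)) {M : ℝ}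
    (hM : ∀ x y, |partialDerivFst h x y| ≤ M) {φ : ℝ → ℝ} (hφ : Continuous φ) (a b x₀ : ℝ) :
    HasDerivAt (fun x => ∫ y in a..b, h x y * φ y)
      (∫ y in a..b, partialDerivFst h x₀ y * φ y) x₀ := by
  have hd := hh.differentiable one_ne_zero
  have hcont : ∀ x, Continuous (h x) := fun x => hh.continuous.comp (.prodMk_right x)
  refine (intervalIntegral.hasDerivAt_integral_of_dominated_loc_of_deriv_le
    (bound := fun y => M * |φ y|) Filter.univ_mem
    (.of_forall fun x => ((hcont x).mul hφ).aestronglyMeasurable.restrict)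
    (((hcont x₀).mul hφ).intervalIntegrable _ _)
    (((continuous_partialDerivFst_apply hh x₀).mul hφ).aestronglyMeasurable.restrict)
    (ae_of_all _ fun y _ x _ => ?_)
    ((continuous_const.mul hφ.abs).intervalIntegrable _ _)
    (ae_of_all _ fun y _ x _ => (hasDerivAt_partialDerivFst hd x y).mul_const (φ y))).2
  rw [Real.norm_eq_abs, abs_mul]
  exact mul_le_mul_of_nonneg_right (hM x y) (abs_nonneg _)

theorem deriv_gmap (hh : ContDiff ℝ 1 (uncurry h)) {M : ℝ}
    (hM : ∀ x y, |partialDerivFst h x y| ≤ M) {φ : ℝ → ℝ} (hφ : Continuous φ) (ε x : ℝ) :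
    deriv (gmap h ε φ) x = 1 + ε * ∫ y in (0:ℝ)..1, partialDerivFst h x y * φ y :=
  (((hasDerivAt_id x).add ((hasDerivAt_integral_mul hh hM hφ 0 1 x).const_mul ε) :
    HasDerivAt (gmap h ε φ) _ x)).deriv

end PartialDerivFst

section IntegralBounds

variable {f g G φ φ₁ φ₂ : ℝ → ℝ} {a b M : ℝ}

theorem abs_integral_mul_le (hab : a ≤ b) (hf : ∀ y, |f y| ≤ M) (hg : ∀ y, |g y| ≤ G y)
    (hG : IntervalIntegrable G volume a b) :
    |∫ y in a..b, f y * g y| ≤ M * ∫ y in a..b, G y := by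
  rw [← intervalIntegral.integral_const_mul, ← Real.norm_eq_abs]
  refine intervalIntegral.norm_integral_le_of_norm_le hab (ae_of_all volume fun y _ => ?_)
    (hG.const_mul M)
  rw [Real.norm_eq_abs, abs_mul]
  exact mul_le_mul (hf y) (hg y) (abs_nonneg _) ((abs_nonneg _).trans (hf a))

theorem abs_integral_mul_le_of_integral_eq_one (hab : a ≤ b) (hf : ∀ y, |f y| ≤ M)
    (hφ : ∀ y, 0 ≤ φ y) (hφi : IntervalIntegrable φ volume a b)
    (hφ1 : ∫ y in a..b, φ y = 1) : |∫ y in a..b, f y * φ y| ≤ M := by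
  simpa [hφ1] using abs_integral_mul_le hab hf (fun y => (abs_of_nonneg (hφ y)).le) hφi

theorem abs_integral_mul_sub_integral_mul_le (hab : a ≤ b) (hf : Continuous f)
    (hφ₁ : Continuous φ₁) (hφ₂ : Continuous φ₂) (hfM : ∀ y, |f y| ≤ M) {S : ℝ}
    (hS : ∀ y, |φ₁ y - φ₂ y| ≤ S) :
    |(∫ y in a..b, f y * φ₁ y) - ∫ y in a..b, f y * φ₂ y| ≤ M * (S * (b - a)) := by
  have hfφ₁ : Continuous fun y => f y * φ₁ y := hf.mul hφ₁
  have hfφ₂ : Continuous fun y => f y * φ₂ y := hf.mul hφ₂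
  rw [← intervalIntegral.integral_sub (hfφ₁.intervalIntegrable a b) (hfφ₂.intervalIntegrable a b)]
  simp_rw [← mul_sub]
  simpa [mul_comm S] using abs_integral_mul_le hab hfM hS intervalIntegrable_const

end IntegralBounds

theorem abs_one_div_one_add_sub_le {a b : ℝ} (ha : |a| ≤ 1 / 2) (hb : |b| ≤ 1 / 2) :
    |1 / (1 + a) - 1 / (1 + b)| ≤ 4 * |a - b| := by
  have ha' : 1 / 2 ≤ 1 + a := by linarith [neg_abs_le a]
  have hb' : 1 / 2 ≤ 1 + b := by linarith [neg_abs_le b]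
  have hprod : 1 / 4 ≤ (1 + a) * (1 + b) := by nlinarith
  have hpos : 0 < (1 + a) * (1 + b) := by linarith
  rw [div_sub_div _ _ (by linarith) (by linarith), abs_div, abs_of_pos hpos, div_le_iff₀ hpos,
    show 1 * (1 + b) - (1 + a) * 1 = -(a - b) by ring, abs_neg]
  nlinarith [abs_nonneg (a - b)]

theorem abs_one_div_deriv_gmap_sub_le {h : ℝ → ℝ → ℝ} (hh : ContDiff ℝ 1 (uncurry h)) {M ε : ℝ}
    (hM : ∀ x y, |partialDerivFst h x y| ≤ M) (hεM : |ε| * M ≤ 1 / 2) {φ₁ φ₂ : ℝ → ℝ}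
    (hc₁ : Continuous φ₁) (hn₁ : ∀ y, 0 ≤ φ₁ y) (hi₁ : ∫ y in (0:ℝ)..1, φ₁ y = 1)
    (hc₂ : Continuous φ₂) (hn₂ : ∀ y, 0 ≤ φ₂ y) (hi₂ : ∫ y in (0:ℝ)..1, φ₂ y = 1) {S : ℝ}
    (hS : ∀ y, |φ₁ y - φ₂ y| ≤ S) (x : ℝ) :
    |1 / deriv (gmap h ε φ₁) x - 1 / deriv (gmap h ε φ₂) x| ≤ 4 * M * |ε| * S := by
  have hsmall : ∀ φ, Continuous φ → (∀ y, 0 ≤ φ y) → ∫ y in (0:ℝ)..1, φ y = 1 →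
      |ε * ∫ y in (0:ℝ)..1, partialDerivFst h x y * φ y| ≤ 1 / 2 := fun φ hc hn hi => by
    rw [abs_mul]
    exact (mul_le_mul_of_nonneg_left (abs_integral_mul_le_of_integral_eq_one zero_le_one
      (hM x) hn (hc.intervalIntegrable 0 1) hi) (abs_nonneg ε)).trans hεM
  rw [deriv_gmap hh hM hc₁, deriv_gmap hh hM hc₂]
  calc _ ≤ 4 * |ε * (∫ y in (0:ℝ)..1, partialDerivFst h x y * φ₁ y) -
          ε * ∫ y in (0:ℝ)..1, partialDerivFst h x y * φ₂ y| :=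
        abs_one_div_one_add_sub_le (hsmall φ₁ hc₁ hn₁ hi₁) (hsmall φ₂ hc₂ hn₂ hi₂)
    _ ≤ 4 * |ε| * (M * (S * (1 - 0))) := by
        rw [← mul_sub, abs_mul, mul_assoc]
        gcongr
        exact abs_integral_mul_sub_integral_mul_le zero_le_one
          (continuous_partialDerivFst_apply hh x) hc₁ hc₂ (hM x) hS
    _ = 4 * M * |ε| * S := by ring

/-- The reciprocals of the derivatives of the coupled maps associated to two densities are
uniformly `C|ε|`-close in terms of the uniform distance of the densities. -/
theorem stmt12 (h : ℝ → ℝ → ℝ) (hC1 : ContDiff ℝ 1 (Function.uncurry h))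
    (hper : periodicH h) :
    ∃ ε₀ > (0:ℝ), ∃ C ≥ (0:ℝ), ∀ ε : ℝ, |ε| ≤ ε₀ →
      ∀ φ₁ φ₂ : ℝ → ℝ,
        (∀ x, φ₁ (x+1) = φ₁ x) → (∀ x, 0 ≤ φ₁ x) → Continuous φ₁ →
        (∫ x in (0:ℝ)..1, φ₁ x) = 1 →
        (∀ x, φ₂ (x+1) = φ₂ x) → (∀ x, 0 ≤ φ₂ x) → Continuous φ₂ →
        (∫ x in (0:ℝ)..1, φ₂ x) = 1 →
        (⨆ x : ℝ, |1 / deriv (gmap h ε φ₁) x - 1 / deriv (gmap h ε φ₂) x|)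
          ≤ C * |ε| * ⨆ x : ℝ, |φ₁ x - φ₂ x| := by
  obtain ⟨M, hM⟩ := hper.partialDerivFst.exists_abs_le (continuous_partialDerivFst hC1)
  have hM0 : 0 ≤ M := (abs_nonneg _).trans (hM 0 0)
  refine ⟨1 / (2 * (M + 1)), by positivity, 4 * M, by positivity, ?_⟩
  intro ε hε φ₁ φ₂ hp₁ hn₁ hc₁ hi₁ hp₂ hn₂ hc₂ hi₂
  have hperiodic : Periodic (fun x => |φ₁ x - φ₂ x|) 1 := fun x => by simp only [hp₁, hp₂]
  have hbdd : BddAbove (range fun x => |φ₁ x - φ₂ x|) :=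
    (hperiodic.isBounded_of_continuous one_ne_zero (hc₁.sub hc₂).abs).bddAbove
  set S := ⨆ x, |φ₁ x - φ₂ x|
  have hS : ∀ y, |φ₁ y - φ₂ y| ≤ S := le_ciSup hbdd
  have hεM : |ε| * M ≤ 1 / 2 := by
    rw [le_div_iff₀ (by positivity)] at hε
    nlinarith [abs_nonneg ε]
  exact Real.iSup_le (abs_one_div_deriv_gmap_sub_le hC1 hM hεM hc₁ hn₁ hi₁ hc₂ hn₂ hi₂ hS)
    (mul_nonneg (by positivity) ((abs_nonneg _).trans (hS 0)))
end
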